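/- The limit set L has one-dimensional Lebesgue measure zero; consequently, for Lebesgue-almost every x ∈ ℝ the limit of |F_ψ(x) − F_ψ(η)|/|x − η|^α as η → x exists and equals 0 (so F_ψ is an ordinary devil's staircase and dim_H({x ∈ ℝ : this limit is 0}) = 1). -/

import Mathlib

open Set Filter MeasureTheory Topology
open scoped ENNReal NNReal

noncomputable section

/-- A conformal iterated function system on a compact interval `X = [x₀, x₁] ⊂ ℝ`:
finitely many (`d + 1`, with `d ≥ 1`) differentiable contractions mapping `X` into its
interior, satisfying the Hölder condition (each `f a` extends to a `C^{1+ε}`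
diffeomorphism of an open interval `Y = (y₀, y₁) ⊃ X` onto its image, with `f a '' Y ⊆ Y`)
and the strong separation condition. -/
structure CIFS where
  d : ℕ
  one_le_d : 1 ≤ d
  x₀ : ℝ
  x₁ : ℝ
  x_lt : x₀ < x₁
  y₀ : ℝ
  y₁ : ℝ
  y₀_lt : y₀ < x₀
  y₁_gt : x₁ < y₁
  f : Fin (d + 1) → ℝ → ℝ
  maps_X : ∀ a, MapsTo (f a) (Icc x₀ x₁) (Ioo x₀ x₁)
  r : ℝ
  r_pos : 0 < r
  r_lt_one : r < 1
  contr : ∀ a, ∀ u ∈ Icc x₀ x₁, ∀ v ∈ Icc x₀ x₁, |f a u - f a v| ≤ r * |u - v|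
  maps_Y : ∀ a, MapsTo (f a) (Ioo y₀ y₁) (Ioo y₀ y₁)
  injOn_Y : ∀ a, InjOn (f a) (Ioo y₀ y₁)
  diff_Y : ∀ a, ∀ x ∈ Ioo y₀ y₁, DifferentiableAt ℝ (f a) x
  deriv_ne : ∀ a, ∀ x ∈ Ioo y₀ y₁, deriv (f a) x ≠ 0
  ε : NNReal
  ε_pos : 0 < ε
  ε_le_one : ε ≤ 1
  hc : NNReal
  holder : ∀ a, HolderOnWith hc ε (deriv (f a)) (Ioo y₀ y₁)
  sep : ∀ a b, a ≠ b → Disjoint (f a '' Icc x₀ x₁) (f b '' Icc x₀ x₁)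

namespace CIFS

/-- the compact interval `X`. -/
def X (S : CIFS) : Set ℝ := Icc S.x₀ S.x₁

/-- `fw ω = f_{x₁} ∘ ⋯ ∘ f_{x_n}` for the word `ω = x₁…x_n`. -/
def fw (S : CIFS) : List (Fin (S.d + 1)) → ℝ → ℝ
  | [] => id
  | a :: ω => S.f a ∘ fw S ω

/-- the limit set `L = ⋂ n ⋃_{|ω| = n} f_ω(X)`. -/
def L (S : CIFS) : Set ℝ :=
  ⋂ n : ℕ, ⋃ ω ∈ {ω : List (Fin (S.d + 1)) | ω.length = n}, S.fw ω '' S.X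

/-- the initial word `x₁…x_n` of a code `x = (x₁x₂…)` (here `x j` is the letter `x_{j+1}`). -/
def code (S : CIFS) (x : ℕ → Fin (S.d + 1)) (n : ℕ) : List (Fin (S.d + 1)) :=
  (List.range n).map x

/-- the coding map `Φ`: sends a code `x` to the unique point of `⋂ n, f_{x₁…x_n}(X)`
(this intersection is a singleton, so we may take its supremum). -/
def Φ (S : CIFS) (x : ℕ → Fin (S.d + 1)) : ℝ :=
  sSup (⋂ n : ℕ, S.fw (S.code x n) '' S.X)

/-- the cylinder set `[ω] ⊆ L` of a word `ω`. -/
def cyl (S : CIFS) (ω : List (Fin (S.d + 1))) : Set ℝ :=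
  S.Φ '' {x | S.code x ω.length = ω}

/-- the left shift on code space. -/
def shift (S : CIFS) (x : ℕ → Fin (S.d + 1)) : ℕ → Fin (S.d + 1) := fun n => x (n + 1)

/-- the Birkhoff sum `S_n g (ξ)` of `g : L → ℝ` evaluated at the point `ξ` with code `x`. -/
def birk (S : CIFS) (g : ℝ → ℝ) (n : ℕ) (x : ℕ → Fin (S.d + 1)) : ℝ :=
  ∑ k ∈ Finset.range n, g (S.Φ fun j => x (j + k))

/-- the code of a point of `L` (a choice of inverse of the coding map `Φ`). -/
def codeOf (S : CIFS) (ξ : ℝ) : ℕ → Fin (S.d + 1) := Function.invFun S.Φ ξ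

/-- the geometric potential `φ(ξ) = log |f'_{x₁}(Φ(σξ))|` for `ξ = (x₁x₂…) ∈ L`. -/
def geom (S : CIFS) : ℝ → ℝ := fun ξ =>
  Real.log |deriv (S.f (S.codeOf ξ 0)) (S.Φ (S.shift (S.codeOf ξ)))|

/-- the `n`-th approximant `(1/n) log Σ_{|ω| = n} exp (sup_{ξ ∈ [ω]} S_n g(ξ))`
of the topological pressure. -/
def presSeq (S : CIFS) (g : ℝ → ℝ) (n : ℕ) : ℝ :=
  Real.log (∑ ω : Fin n → Fin (S.d + 1),
      Real.exp (sSup (S.birk g n '' {x : ℕ → Fin (S.d + 1) | ∀ i : Fin n, x i.1 = ω i}))) / n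

/-- `P(g) = p` : the defining limit of the topological pressure exists and equals `p`. -/
def HasPressure (S : CIFS) (g : ℝ → ℝ) (p : ℝ) : Prop :=
  Tendsto (S.presSeq g) atTop (nhds p)

/-- Hölder continuity on the limit set. -/
def HolderOn (S : CIFS) (g : ℝ → ℝ) : Prop :=
  ∃ c e : NNReal, 0 < e ∧ HolderOnWith c e g S.L

/-- the standing assumptions on the potential `ψ` (for the exponent `α`):
`ψ` is Hölder continuous, `ψ < 0`, `P(ψ) = 0` and `ψ > αφ` on `L`. -/
def GoodPotential (S : CIFS) (α : ℝ) (ψ : ℝ → ℝ) : Prop :=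
  S.HolderOn ψ ∧ (∀ ξ ∈ S.L, ψ ξ < 0) ∧ S.HasPressure ψ 0 ∧
    ∀ ξ ∈ S.L, α * S.geom ξ < ψ ξ

/-- the Gibbs property of the measure `ν` for the potential `ψ`. -/
def IsGibbs (S : CIFS) (ψ : ℝ → ℝ) (ν : Measure ℝ) : Prop :=
  ∃ c : ℝ, 1 ≤ c ∧ ∀ n : ℕ, ∀ x : ℕ → Fin (S.d + 1),
    c⁻¹ * Real.exp (S.birk ψ n x) ≤ (ν (S.cyl (S.code x n))).toReal ∧
      (ν (S.cyl (S.code x n))).toReal ≤ c * Real.exp (S.birk ψ n x)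

/-- the set `E` of codes which are eventually constant equal to `0` or to `1`;
`L* = L \ Φ(E)`. -/
def Ecode (S : CIFS) : Set (ℕ → Fin (S.d + 1)) :=
  {x | ∃ i : Fin (S.d + 1), (i = 0 ∨ i = 1) ∧ ∃ n : ℕ, ∀ k ≥ n, x k = i}

/-- the code `x` has an `i`-block of length `k` at the `n`-th level:
`x_n ≠ i`, `x_{n+k+1} ≠ i` and `x_{n+m} = i` for `1 ≤ m ≤ k`
(recall `x j` is the letter `x_{j+1}`). -/
def HasBlock (S : CIFS) (x : ℕ → Fin (S.d + 1)) (i : Fin (S.d + 1)) (k n : ℕ) : Prop :=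
  x (n - 1) ≠ i ∧ x (n + k) ≠ i ∧ ∀ m : ℕ, 1 ≤ m → m ≤ k → x (n + m - 1) = i

/-- the labelling convention: `f 0 (X)` is the leftmost and `f 1 (X)` the rightmost
interval of the first level. -/
def Labeled (S : CIFS) : Prop :=
  (∀ a : Fin (S.d + 1), a ≠ 0 → ∀ u ∈ S.f 0 '' S.X, ∀ v ∈ S.f a '' S.X, u < v) ∧
  (∀ a : Fin (S.d + 1), a ≠ 1 → ∀ u ∈ S.f 1 '' S.X, ∀ v ∈ S.f a '' S.X, v < u)

end CIFS

/-- the distribution function `F(t) = ν((-∞, t])` of a measure `ν`. -/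
def distFun (ν : Measure ℝ) : ℝ → ℝ := fun t => (ν (Iic t)).toReal

/-- the `α`-Hölder difference quotient `|F(ξ) - F(η)| / |ξ - η|^α`. -/
def hquot (F : ℝ → ℝ) (α ξ η : ℝ) : ℝ := |F ξ - F η| / |ξ - η| ^ α

/-- the `α`-Hölder derivative of `F` at `ξ` exists in `[0,∞]` and equals `ℓ`. -/
def HolderDerivAt (F : ℝ → ℝ) (α ξ : ℝ) (ℓ : ℝ≥0∞) : Prop :=
  Tendsto (fun η => ENNReal.ofReal (hquot F α ξ η)) (nhdsWithin ξ {ξ}ᶜ) (nhds ℓ)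

/-- the set `Λ_ψ^α` of points of `L` where the `α`-Hölder derivative of the
distribution function of the Gibbs measure `ν = ν_ψ` does not exist in `[0,∞]`. -/
def CIFS.Lambda (S : CIFS) (ψ : ℝ → ℝ) (α : ℝ) (ν : Measure ℝ) : Set ℝ :=
  {ξ ∈ S.L | ¬∃ ℓ : ℝ≥0∞, HolderDerivAt (distFun ν) α ξ ℓ}

/-!
Bounded distortion (this is where the `C^{1+ε}` hypothesis enters): `|f_ω'|` varies on `X`
by at most a factor `K` independent of the word `ω`. Hence the gap `X \ ⋃ₐ f_a(X)`, which has
positive length next to `x₀`, occupies a fixed proportion of every cylinder `f_ω(X)`, so the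
`n`-th level of the construction has measure at most `cⁿ |X|` with `c < 1` and `L` is
Lebesgue-null. Off the closed set `L` the distribution function of `ν` is locally constant,
so its `α`-Hölder derivative vanishes on the open, conull set `Lᶜ`.
-/

theorem abs_log_sub_log_le_div {m p q : ℝ} (hm : 0 < m) (hp : m ≤ p) (hq : m ≤ q) :
    |Real.log p - Real.log q| ≤ |p - q| / m := by
  wlog hqp : q ≤ p generalizing p q
  · rw [abs_sub_comm, abs_sub_comm p q]
    exact this hq hp (le_of_not_ge hqp)
  have hp0 : 0 < p := hm.trans_le hp
  have hq0 : 0 < q := hm.trans_le hq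
  rw [abs_of_nonneg (sub_nonneg.2 (Real.log_le_log hq0 hqp)), abs_of_nonneg (sub_nonneg.2 hqp),
    ← Real.log_div hp0.ne' hq0.ne']
  calc Real.log (p / q) ≤ p / q - 1 := Real.log_le_sub_one_of_pos (div_pos hp0 hq0)
    _ = (p - q) / q := by field_simp
    _ ≤ (p - q) / m := div_le_div_of_nonneg_left (sub_nonneg.2 hqp) hm hq

theorem volume_image_eq_lintegral_abs_deriv {F : ℝ → ℝ} {s : Set ℝ} (hs : MeasurableSet s)
    (hF : ∀ x ∈ s, DifferentiableAt ℝ F x) (hinj : InjOn F s) :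
    volume (F '' s) = ∫⁻ x in s, ENNReal.ofReal |deriv F x| := by
  simpa using lintegral_image_eq_lintegral_abs_deriv_mul hs
    (fun x hx => (hF x hx).hasDerivAt.hasDerivWithinAt) hinj 1

theorem volume_mul_volume_image_le {F : ℝ → ℝ} {X s : Set ℝ} {K : ℝ} (hX : MeasurableSet X)
    (hs : MeasurableSet s) (hsX : s ⊆ X) (hF : ∀ x ∈ X, DifferentiableAt ℝ F x)
    (hinj : InjOn F X) (hK : ∀ u ∈ X, ∀ v ∈ X, |deriv F u| ≤ K * |deriv F v|) :
    volume s * volume (F '' X) ≤ ENNReal.ofReal K * volume X * volume (F '' s) := by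
  have hbound : ∀ v ∈ s,
      volume (F '' X) ≤ ENNReal.ofReal K * volume X * ENNReal.ofReal |deriv F v| := by
    intro v hv
    rw [volume_image_eq_lintegral_abs_deriv hX hF hinj, mul_right_comm, ← setLIntegral_const]
    refine setLIntegral_mono' hX fun u hu => ?_
    rw [← ENNReal.ofReal_mul' (abs_nonneg _)]
    exact ENNReal.ofReal_le_ofReal (hK u hu v (hsX hv))
  rw [volume_image_eq_lintegral_abs_deriv hs (fun x hx => hF x (hsX hx)) (hinj.mono hsX),
    ← lintegral_const_mul _ (measurable_deriv F).abs.ennreal_ofReal, mul_comm,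
    ← setLIntegral_const]
  exact setLIntegral_mono' hs hbound

theorem measure_iInter_eq_zero_of_le_mul {α : Type*} [MeasurableSpace α] {μ : Measure α}
    {s : ℕ → Set α} {c : ℝ≥0∞} (hc : c < 1) (h0 : μ (s 0) ≠ ∞)
    (hs : ∀ n, μ (s (n + 1)) ≤ c * μ (s n)) : μ (⋂ n, s n) = 0 := by
  have hpow : ∀ n, μ (s n) ≤ c ^ n * μ (s 0) := by
    intro n
    induction n with
    | zero => simp
    | succ n ih =>
      calc μ (s (n + 1)) ≤ c * (c ^ n * μ (s 0)) := (hs n).trans (by gcongr)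
        _ = c ^ (n + 1) * μ (s 0) := by rw [pow_succ', mul_assoc]
  have hlim : Tendsto (fun n => c ^ n * μ (s 0)) atTop (𝓝 0) := by
    simpa using ENNReal.Tendsto.mul_const (ENNReal.tendsto_pow_atTop_nhds_zero_of_lt_one hc)
      (Or.inr h0)
  exact le_antisymm (ge_of_tendsto' hlim fun n => (measure_mono (iInter_subset s n)).trans
    (hpow n)) bot_le

namespace CIFS

variable (S : CIFS)

lemma X_subset_Y : S.X ⊆ Ioo S.y₀ S.y₁ := fun _ hx =>
  ⟨S.y₀_lt.trans_le hx.1, hx.2.trans_lt S.y₁_gt⟩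

lemma measurableSet_X : MeasurableSet S.X := measurableSet_Icc

lemma volume_X_ne_top : volume S.X ≠ ∞ := measure_Icc_lt_top.ne

lemma mapsTo_f (a : Fin (S.d + 1)) : MapsTo (S.f a) S.X S.X :=
  (S.maps_X a).mono_right Ioo_subset_Icc_self

lemma mapsTo_fw : ∀ ω, MapsTo (S.fw ω) S.X S.X
  | [] => mapsTo_id _
  | a :: ω => (S.mapsTo_f a).comp (mapsTo_fw ω)

lemma mapsTo_fw_Y : ∀ ω, MapsTo (S.fw ω) (Ioo S.y₀ S.y₁) (Ioo S.y₀ S.y₁)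
  | [] => mapsTo_id _
  | a :: ω => (S.maps_Y a).comp (mapsTo_fw_Y ω)

lemma differentiableAt_fw : ∀ ω, ∀ x ∈ Ioo S.y₀ S.y₁, DifferentiableAt ℝ (S.fw ω) x
  | [] => fun _ _ => differentiableAt_id
  | a :: ω => fun x hx =>
      (S.diff_Y a _ (S.mapsTo_fw_Y ω hx)).comp x (differentiableAt_fw ω x hx)

lemma continuousOn_fw (ω : List (Fin (S.d + 1))) : ContinuousOn (S.fw ω) S.X := fun x hx =>
  (S.differentiableAt_fw ω x (S.X_subset_Y hx)).continuousAt.continuousWithinAt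

lemma isCompact_image_fw (ω : List (Fin (S.d + 1))) {s : Set ℝ} (hs : IsCompact s)
    (hsX : s ⊆ S.X) : IsCompact (S.fw ω '' s) :=
  hs.image_of_continuousOn ((S.continuousOn_fw ω).mono hsX)

lemma deriv_fw_cons (a : Fin (S.d + 1)) (ω : List (Fin (S.d + 1))) {x : ℝ}
    (hx : x ∈ Ioo S.y₀ S.y₁) :
    deriv (S.fw (a :: ω)) x = deriv (S.f a) (S.fw ω x) * deriv (S.fw ω) x :=
  deriv_comp x (S.diff_Y a _ (S.mapsTo_fw_Y ω hx)) (S.differentiableAt_fw ω x hx)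

lemma deriv_fw_ne_zero : ∀ ω, ∀ x ∈ Ioo S.y₀ S.y₁, deriv (S.fw ω) x ≠ 0
  | [] => fun _ _ => by simp [fw]
  | a :: ω => fun x hx => by
      rw [S.deriv_fw_cons a ω hx]
      exact mul_ne_zero (S.deriv_ne a _ (S.mapsTo_fw_Y ω hx)) (deriv_fw_ne_zero ω x hx)

lemma abs_fw_sub_le : ∀ ω, ∀ u ∈ S.X, ∀ v ∈ S.X,
    |S.fw ω u - S.fw ω v| ≤ S.r ^ ω.length * |u - v|
  | [] => fun u _ v _ => by simp [fw]
  | a :: ω => fun u hu v hv =>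
    calc |S.f a (S.fw ω u) - S.f a (S.fw ω v)| ≤ S.r * |S.fw ω u - S.fw ω v| :=
          S.contr a _ (S.mapsTo_fw ω hu) _ (S.mapsTo_fw ω hv)
      _ ≤ S.r * (S.r ^ ω.length * |u - v|) := by
          gcongr
          · exact S.r_pos.le
          · exact abs_fw_sub_le ω u hu v hv
      _ = S.r ^ (a :: ω).length * |u - v| := by rw [List.length_cons, pow_succ']; ring

lemma injOn_fw : ∀ ω, InjOn (S.fw ω) S.X
  | [] => injOn_id _
  | a :: ω => ((S.injOn_Y a).mono S.X_subset_Y).comp (injOn_fw ω) (S.mapsTo_fw ω)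

lemma fw_append_singleton (a : Fin (S.d + 1)) :
    ∀ ω : List (Fin (S.d + 1)), S.fw (ω ++ [a]) = S.fw ω ∘ S.f a
  | [] => rfl
  | b :: ω => by
      change S.f b ∘ S.fw (ω ++ [a]) = (S.f b ∘ S.fw ω) ∘ S.f a
      rw [fw_append_singleton a ω]
      rfl

lemma disjoint_image_fw : ∀ ω ω' : List (Fin (S.d + 1)), ω.length = ω'.length → ω ≠ ω' →
    Disjoint (S.fw ω '' S.X) (S.fw ω' '' S.X)
  | [], [], _, hne => absurd rfl hne
  | a :: t, b :: t', hlen, hne => by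
      simp only [fw, image_comp]
      by_cases hab : a = b
      · subst hab
        exact (disjoint_image_fw t t' (by simpa using hlen) fun h => hne (h ▸ rfl)).image
          ((S.injOn_Y a).mono S.X_subset_Y) (S.mapsTo_fw t).image_subset
          (S.mapsTo_fw t').image_subset
      · exact (S.sep a b hab).mono (image_mono (S.mapsTo_fw t).image_subset)
          (image_mono (S.mapsTo_fw t').image_subset)

lemma exists_pos_le_abs_deriv_f :
    ∃ m : ℝ, 0 < m ∧ ∀ a, ∀ x ∈ S.X, m ≤ |deriv (S.f a) x| := by
  have hmin (a : Fin (S.d + 1)) : ∃ z ∈ S.X, IsMinOn (fun x => |deriv (S.f a) x|) S.X z :=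
    isCompact_Icc.exists_isMinOn (nonempty_Icc.2 S.x_lt.le)
      (((S.holder a).continuousOn S.ε_pos).mono S.X_subset_Y).abs
  choose z hz hmin using hmin
  refine ⟨Finset.univ.inf' Finset.univ_nonempty fun a => |deriv (S.f a) (z a)|, ?_,
    fun a x hx => (Finset.inf'_le _ (Finset.mem_univ a)).trans (hmin a hx)⟩
  exact (Finset.lt_inf'_iff _).2 fun a _ => abs_pos.2 (S.deriv_ne a _ (S.X_subset_Y (hz a)))

lemma exists_abs_log_abs_deriv_f_sub_le : ∃ C : ℝ, 0 ≤ C ∧ ∀ a, ∀ u ∈ S.X, ∀ v ∈ S.X,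
    |Real.log (|deriv (S.f a) u|) - Real.log (|deriv (S.f a) v|)| ≤ C * |u - v| ^ (S.ε : ℝ) := by
  obtain ⟨m, hm, hle⟩ := S.exists_pos_le_abs_deriv_f
  refine ⟨S.hc / m, by positivity, fun a u hu v hv => ?_⟩
  calc |Real.log (|deriv (S.f a) u|) - Real.log (|deriv (S.f a) v|)|
      ≤ |(|deriv (S.f a) u| - |deriv (S.f a) v|)| / m :=
        abs_log_sub_log_le_div hm (hle a u hu) (hle a v hv)
    _ ≤ |deriv (S.f a) u - deriv (S.f a) v| / m := by
        gcongr ?_ / m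
        exact abs_abs_sub_abs_le_abs_sub _ _
    _ ≤ S.hc * |u - v| ^ (S.ε : ℝ) / m := by
        gcongr
        simpa only [Real.dist_eq] using
          (S.holder a).dist_le (S.X_subset_Y hu) (S.X_subset_Y hv)
    _ = S.hc / m * |u - v| ^ (S.ε : ℝ) := by ring

lemma exists_abs_log_abs_deriv_fw_sub_le : ∃ D : ℝ, ∀ ω, ∀ u ∈ S.X, ∀ v ∈ S.X,
    |Real.log (|deriv (S.fw ω) u|) - Real.log (|deriv (S.fw ω) v|)| ≤ D := by
  obtain ⟨C, hC, hlog⟩ := S.exists_abs_log_abs_deriv_f_sub_le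
  set e : ℝ := (S.ε : ℝ)
  set q : ℝ := S.r ^ e
  have hq0 : 0 ≤ q := Real.rpow_nonneg S.r_pos.le e
  have hq1 : q < 1 := Real.rpow_lt_one S.r_pos.le S.r_lt_one S.ε_pos
  set D := C * (S.x₁ - S.x₀) ^ e / (1 - q)
  have hD : 0 ≤ D := div_nonneg (mul_nonneg hC (by have := S.x_lt; positivity)) (by linarith)
  have hDq : D * (1 - q) = C * (S.x₁ - S.x₀) ^ e := div_mul_cancel₀ _ (by linarith)
  -- the letter at depth `k` contributes at most `C (r ^ k |X|) ^ ε`: a geometric series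
  suffices h : ∀ ω, ∀ u ∈ S.X, ∀ v ∈ S.X,
      |Real.log (|deriv (S.fw ω) u|) - Real.log (|deriv (S.fw ω) v|)| ≤
        D * (1 - q ^ ω.length) from
    ⟨D, fun ω u hu v hv => (h ω u hu v hv).trans
      (mul_le_of_le_one_right hD (sub_le_self _ (pow_nonneg hq0 _)))⟩
  intro ω
  induction ω with
  | nil => simp [fw]
  | cons a t ih =>
    intro u hu v hv
    have hlog_cons : ∀ x ∈ S.X, Real.log (|deriv (S.fw (a :: t)) x|) =
        Real.log (|deriv (S.f a) (S.fw t x)|) + Real.log (|deriv (S.fw t) x|) := fun x hx => by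
      rw [S.deriv_fw_cons a t (S.X_subset_Y hx), abs_mul, Real.log_mul
        (abs_ne_zero.2 (S.deriv_ne a _ (S.mapsTo_fw_Y t (S.X_subset_Y hx))))
        (abs_ne_zero.2 (S.deriv_fw_ne_zero t x (S.X_subset_Y hx)))]
    have hdist : |S.fw t u - S.fw t v| ^ e ≤ q ^ t.length * (S.x₁ - S.x₀) ^ e := by
      calc |S.fw t u - S.fw t v| ^ e ≤ (S.r ^ t.length * (S.x₁ - S.x₀)) ^ e := by
            gcongr
            refine (S.abs_fw_sub_le t u hu v hv).trans
              (mul_le_mul_of_nonneg_left ?_ (pow_nonneg S.r_pos.le _))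
            simpa only [Real.dist_eq] using Real.dist_le_of_mem_Icc hu hv
        _ = q ^ t.length * (S.x₁ - S.x₀) ^ e := by
            rw [Real.mul_rpow (by have := S.r_pos; positivity) (sub_nonneg.2 S.x_lt.le),
              Real.rpow_pow_comm S.r_pos.le]
    calc |Real.log (|deriv (S.fw (a :: t)) u|) - Real.log (|deriv (S.fw (a :: t)) v|)|
        = |(Real.log (|deriv (S.f a) (S.fw t u)|) - Real.log (|deriv (S.f a) (S.fw t v)|)) +
            (Real.log (|deriv (S.fw t) u|) - Real.log (|deriv (S.fw t) v|))| := by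
          rw [hlog_cons u hu, hlog_cons v hv]
          ring_nf
      _ ≤ C * |S.fw t u - S.fw t v| ^ e + D * (1 - q ^ t.length) :=
          (abs_add_le _ _).trans (add_le_add
            (hlog a _ (S.mapsTo_fw t hu) _ (S.mapsTo_fw t hv)) (ih u hu v hv))
      _ ≤ C * (q ^ t.length * (S.x₁ - S.x₀) ^ e) + D * (1 - q ^ t.length) := by
          gcongr
      _ = D * (1 - q ^ (a :: t).length) := by
          rw [List.length_cons, pow_succ]
          linear_combination (-(q ^ t.length)) * hDq

lemma exists_abs_deriv_fw_le_mul : ∃ K : ℝ, ∀ ω, ∀ u ∈ S.X, ∀ v ∈ S.X,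
    |deriv (S.fw ω) u| ≤ K * |deriv (S.fw ω) v| := by
  obtain ⟨D, hD⟩ := S.exists_abs_log_abs_deriv_fw_sub_le
  refine ⟨Real.exp D, fun ω u hu v hv => ?_⟩
  have hpos : ∀ x ∈ S.X, 0 < |deriv (S.fw ω) x| := fun x hx =>
    abs_pos.2 (S.deriv_fw_ne_zero ω x (S.X_subset_Y hx))
  rw [← Real.exp_log (hpos u hu), ← Real.exp_log (hpos v hv), ← Real.exp_add]
  exact Real.exp_le_exp.2 (by linarith [(abs_le.1 (hD ω u hu v hv)).2])

def words (n : ℕ) : Finset (List (Fin (S.d + 1))) :=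
  (List.finite_length_eq (Fin (S.d + 1)) n).toFinset

lemma mem_words {n : ℕ} {ω : List (Fin (S.d + 1))} : ω ∈ S.words n ↔ ω.length = n :=
  Set.Finite.mem_toFinset _

def level (n : ℕ) : Set ℝ := ⋃ ω ∈ S.words n, S.fw ω '' S.X

lemma L_eq_iInter_level : S.L = ⋂ n, S.level n := by
  simp only [L, level, mem_words, mem_ofPred_eq]

lemma level_subset_X (n : ℕ) : S.level n ⊆ S.X :=
  iUnion₂_subset fun ω _ => (S.mapsTo_fw ω).image_subset

lemma isCompact_level (n : ℕ) : IsCompact (S.level n) :=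
  (S.words n).isCompact_biUnion fun ω _ => S.isCompact_image_fw ω isCompact_Icc subset_rfl

lemma isClosed_L : IsClosed S.L := by
  rw [L_eq_iInter_level]
  exact isClosed_iInter fun n => (S.isCompact_level n).isClosed

lemma level_succ_subset (n : ℕ) : S.level (n + 1) ⊆ ⋃ ω ∈ S.words n, S.fw ω '' S.level 1 := by
  simp only [level, iUnion₂_subset_iff]
  intro ω' hω'
  obtain ⟨ω, a, rfl⟩ := (List.eq_nil_or_concat' ω').resolve_left
    (by rintro rfl; simp [mem_words] at hω')
  have hω : ω ∈ S.words n := by simpa [mem_words] using hω'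
  have ha : [a] ∈ S.words 1 := S.mem_words.2 rfl
  rw [S.fw_append_singleton, image_comp]
  exact (image_mono (subset_biUnion_of_mem (u := fun ω => S.fw ω '' S.X) ha)).trans
    (subset_biUnion_of_mem (u := fun ω => S.fw ω '' _) hω)

lemma x₀_notMem_level_one : S.x₀ ∉ S.level 1 := by
  simp only [level, mem_iUnion₂, not_exists]
  intro ω hω ⟨x, hx, hx₀⟩
  obtain ⟨a, rfl⟩ := List.length_eq_one_iff.1 (S.mem_words.1 hω)
  exact (S.maps_X a hx).1.ne' hx₀

lemma volume_X_diff_level_one_pos : 0 < volume (S.X \ S.level 1) := by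
  have hmem : S.X \ S.level 1 ∈ 𝓝[≥] S.x₀ := sdiff_mem (Icc_mem_nhdsGE S.x_lt)
    (mem_nhdsWithin_of_mem_nhds ((S.isCompact_level 1).isClosed.compl_mem_nhds
      S.x₀_notMem_level_one))
  obtain ⟨u, hu, hsub⟩ := (mem_nhdsGE_iff_exists_Ico_subset).1 hmem
  calc (0 : ℝ≥0∞) < volume (Ico S.x₀ u) := by simpa using hu
    _ ≤ volume (S.X \ S.level 1) := measure_mono hsub

lemma exists_volume_image_fw_level_one_le :
    ∃ c < 1, ∀ ω, volume (S.fw ω '' S.level 1) ≤ c * volume (S.fw ω '' S.X) := by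
  obtain ⟨K, hK⟩ := S.exists_abs_deriv_fw_le_mul
  set κ := ENNReal.ofReal K * volume S.X
  have hκ : κ ≠ ∞ := ENNReal.mul_ne_top ENNReal.ofReal_ne_top S.volume_X_ne_top
  set g := volume (S.X \ S.level 1)
  have hA : S.level 1 ⊆ S.X := S.level_subset_X 1
  have hAm : MeasurableSet (S.level 1) := (S.isCompact_level 1).isClosed.measurableSet
  refine ⟨1 - g / κ, ENNReal.sub_lt_self ENNReal.one_ne_top one_ne_zero
    (ENNReal.div_ne_zero.2 ⟨S.volume_X_diff_level_one_pos.ne', hκ⟩), fun ω => ?_⟩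
  set F := S.fw ω
  have hYfin : volume (F '' S.X) ≠ ∞ :=
    ne_top_of_le_ne_top S.volume_X_ne_top (measure_mono (S.mapsTo_fw ω).image_subset)
  have hZY : volume (F '' S.level 1) ≤ volume (F '' S.X) := measure_mono (image_mono hA)
  have hgap : g * volume (F '' S.X) ≤ κ * (volume (F '' S.X) - volume (F '' S.level 1)) := by
    rw [← measure_sdiff (image_mono hA)
      (S.isCompact_image_fw ω (S.isCompact_level 1) hA).measurableSet.nullMeasurableSet
      (ne_top_of_le_ne_top hYfin hZY), ← (S.injOn_fw ω).image_sdiff_subset hA]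
    exact volume_mul_volume_image_le S.measurableSet_X (S.measurableSet_X.diff hAm) sdiff_subset
      (fun x hx => S.differentiableAt_fw ω x (S.X_subset_Y hx)) (S.injOn_fw ω) (hK ω)
  have hratio : g / κ * volume (F '' S.X) ≤ volume (F '' S.X) - volume (F '' S.level 1) := by
    rw [div_eq_mul_inv, mul_right_comm]
    exact ENNReal.div_le_of_le_mul (by rwa [mul_comm _ κ])
  calc volume (F '' S.level 1)
      = volume (F '' S.X) - (volume (F '' S.X) - volume (F '' S.level 1)) :=
        (ENNReal.sub_sub_cancel hYfin hZY).symm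
    _ ≤ volume (F '' S.X) - g / κ * volume (F '' S.X) := tsub_le_tsub_left hratio _
    _ = (1 - g / κ) * volume (F '' S.X) := by
        rw [ENNReal.sub_mul fun _ _ => hYfin, one_mul]

lemma volume_level_succ_le {c : ℝ≥0∞}
    (hc : ∀ ω, volume (S.fw ω '' S.level 1) ≤ c * volume (S.fw ω '' S.X)) (n : ℕ) :
    volume (S.level (n + 1)) ≤ c * volume (S.level n) := by
  have hdisj : (S.words n : Set (List (Fin (S.d + 1)))).PairwiseDisjoint
      fun ω => S.fw ω '' S.X := fun ω hω ω' hω' hne =>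
    S.disjoint_image_fw ω ω' ((S.mem_words.1 hω).trans (S.mem_words.1 hω').symm) hne
  calc volume (S.level (n + 1))
      ≤ ∑ ω ∈ S.words n, volume (S.fw ω '' S.level 1) :=
        (measure_mono (S.level_succ_subset n)).trans (measure_biUnion_finset_le _ _)
    _ ≤ ∑ ω ∈ S.words n, c * volume (S.fw ω '' S.X) := Finset.sum_le_sum fun ω _ => hc ω
    _ = c * volume (S.level n) := by
        rw [← Finset.mul_sum, level, measure_biUnion_finset hdisj fun ω _ =>
          (S.isCompact_image_fw ω isCompact_Icc subset_rfl).measurableSet]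

theorem volume_L : volume S.L = 0 := by
  obtain ⟨c, hc, hword⟩ := S.exists_volume_image_fw_level_one_le
  rw [L_eq_iInter_level]
  exact measure_iInter_eq_zero_of_le_mul hc
    (ne_top_of_le_ne_top S.volume_X_ne_top (measure_mono (S.level_subset_X 0)))
    (S.volume_level_succ_le hword)

end CIFS

theorem measure_Iic_eq_of_measure_Ioc_eq_zero {ν : Measure ℝ} {u v : ℝ} (huv : u ≤ v)
    (h : ν (Ioc u v) = 0) : ν (Iic u) = ν (Iic v) := by
  rw [← Iic_union_Ioc_eq_Iic huv, measure_union (Iic_disjoint_Ioc le_rfl) measurableSet_Ioc, h,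
    add_zero]

theorem distFun_eventuallyEq_of_notMem {ν : Measure ℝ} {C : Set ℝ} (hC : IsClosed C)
    (hν : ν Cᶜ = 0) {x : ℝ} (hx : x ∉ C) : distFun ν =ᶠ[𝓝 x] fun _ => distFun ν x := by
  obtain ⟨a, b, hxab, hsub⟩ := mem_nhds_iff_exists_Ioo_subset.1 (hC.isOpen_compl.mem_nhds hx)
  have hnull {u v : ℝ} (hu : u ∈ Ioo a b) (hv : v ∈ Ioo a b) : ν (Ioc u v) = 0 :=
    measure_mono_null (fun _ hz => hsub ⟨hu.1.trans hz.1, hz.2.trans_lt hv.2⟩) hν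
  filter_upwards [Ioo_mem_nhds hxab.1 hxab.2] with η hη
  rcases le_total η x with h | h
  · exact congrArg ENNReal.toReal (measure_Iic_eq_of_measure_Ioc_eq_zero h (hnull hη hxab))
  · exact congrArg ENNReal.toReal (measure_Iic_eq_of_measure_Ioc_eq_zero h (hnull hxab hη)).symm

theorem holderDerivAt_zero_of_eventuallyEq {F : ℝ → ℝ} {α x : ℝ}
    (h : F =ᶠ[𝓝 x] fun _ => F x) : HolderDerivAt F α x 0 := by
  refine tendsto_const_nhds.congr' ?_
  filter_upwards [nhdsWithin_le_nhds h] with η hη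
  simp [hquot, hη]

theorem devil_staircase_general (S : CIFS)
    (α : ℝ) (ν : Measure ℝ)
    (hsupp : ν S.Lᶜ = 0) :
    volume S.L = 0 ∧
      (∀ᵐ x : ℝ ∂volume, HolderDerivAt (distFun ν) α x 0) ∧
      dimH {x : ℝ | HolderDerivAt (distFun ν) α x 0} = 1 := by
  have hoff : S.Lᶜ ⊆ {x | HolderDerivAt (distFun ν) α x 0} := fun x hx =>
    holderDerivAt_zero_of_eventuallyEq (distFun_eventuallyEq_of_notMem S.isClosed_L hsupp hx)
  have hLc : S.Lᶜ.Nonempty := nonempty_compl.2 fun h => by simpa [h] using S.volume_L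
  refine ⟨S.volume_L, measure_mono_null (compl_subset_comm.1 hoff) S.volume_L, ?_⟩
  rw [Real.dimH_of_nonempty_interior (hLc.mono (interior_maximal hoff S.isClosed_L.isOpen_compl)),
    Module.finrank_self, Nat.cast_one]

/-- The limit set is Lebesgue-null; consequently, at Lebesgue-almost every `x ∈ ℝ` the
`α`-Hölder derivative of `F_ψ` exists and equals `0` (so `F_ψ` is an ordinary devil's
staircase), and `dim_H {x : D^αF_ψ(x) = 0} = 1`. -/
theorem devil_staircase (S : CIFS)
    (α : ℝ) (hα : 0 < α) (ψ : ℝ → ℝ) (hψ : S.GoodPotential α ψ)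
    (ν : Measure ℝ) (hprob : IsProbabilityMeasure ν)
    (hsupp : ν S.Lᶜ = 0) (hgibbs : S.IsGibbs ψ ν) :
    volume S.L = 0 ∧
      (∀ᵐ x : ℝ ∂volume, HolderDerivAt (distFun ν) α x 0) ∧
      dimH {x : ℝ | HolderDerivAt (distFun ν) α x 0} = 1 :=
  devil_staircase_general S α ν hsupp
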